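/- arXiv:1906.01850 — 4 statements merged into one kernel-verified Lean document; each statement's English description precedes it below -/
import Mathlib

section
/- Suppose P_n, Q_n are sequences of probability measures with n·H²(P_n, Q_n) → h for some h > 0. Then the total variation distance between the n-fold products satisfies: liminf_n (1 - TV(P_n^n, Q_n^n)) ≥ 1 - (1 - exp(-2h))^{1/2} > 0 and limsup_n (1 - TV(P_n^n, Q_n^n)) ≤ exp(-h) < 1. -/
open MeasureTheory Filter

/-- Total variation distance `TV(P, Q) = sup_A (P(A) - Q(A))`. -/
noncomputable def tvDist {Ω : Type*} [MeasurableSpace Ω] (P Q : Measure Ω) : ℝ :=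
  ⨆ A : {A : Set Ω // MeasurableSet A}, ((P A).toReal - (Q A).toReal)

/-- Squared Hellinger distance `H²(P,Q) = 1 - ∫ √(pq) dμ` with `μ = P + Q`. -/
noncomputable def hellingerSqM {Ω : Type*} [MeasurableSpace Ω] (P Q : Measure Ω) : ℝ :=
  1 - ∫ x, Real.sqrt ((P.rnDeriv (P + Q) x).toReal * (Q.rnDeriv (P + Q) x).toReal) ∂(P + Q)

/-!
Write `ρ(P, Q) = ∫ √(dP/dν · dQ/dν) dν` for the Bhattacharyya affinity, so that `H² = 1 - ρ`.
The affinity does not depend on the dominating measure and is multiplicative under products,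
so `1 - H²(Pⁿ, Qⁿ) = (1 - H²(P, Q))ⁿ`, which tends to `e^{-h}` when `n H²(P_n, Q_n) → h`.
Le Cam's inequalities `H² ≤ TV ≤ √(H² (2 - H²))` then squeeze `1 - TV(P_nⁿ, Q_nⁿ)` between
`1 - √(1 - (1 - H²)²ⁿ) → 1 - √(1 - e^{-2h})` and `(1 - H²)ⁿ → e^{-h}`. The first inequality
is `1 - TV ≤ ∫ min(p, q) ≤ ∫ √(pq)`; the second is `TV ≤ ½ ∫ |p - q|` followed by
Cauchy–Schwarz for `|p - q| = |√p - √q| (√p + √q)`.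
-/

open scoped ENNReal Topology

section Bhattacharyya

variable {Ω : Type*} [MeasurableSpace Ω]

noncomputable def bhattacharyya (P Q ν : Measure Ω) : ℝ :=
  ∫ x, √((P.rnDeriv ν x).toReal * (Q.rnDeriv ν x).toReal) ∂ν

lemma hellingerSqM_eq_one_sub_bhattacharyya (P Q : Measure Ω) :
    hellingerSqM P Q = 1 - bhattacharyya P Q (P + Q) := rfl

/-- By the chain rule, the densities with respect to `ν` are those with respect to `P + Q` times
`d(P + Q)/dν`, which factors out of the square root. -/
lemma bhattacharyya_eq_bhattacharyya_add {P Q ν : Measure Ω} [SigmaFinite P]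
    [SigmaFinite Q] [SigmaFinite ν] (hP : P ≪ ν) (hQ : Q ≪ ν) :
    bhattacharyya P Q ν = bhattacharyya P Q (P + Q) := by
  have hPμ : P ≪ P + Q := Measure.AbsolutelyContinuous.rfl.add_right Q
  have hQμ : Q ≪ P + Q := Measure.AbsolutelyContinuous.rfl.add_right' P
  rw [bhattacharyya, bhattacharyya, ← integral_rnDeriv_smul (hP.add_left hQ)]
  refine integral_congr_ae ?_
  filter_upwards [Measure.rnDeriv_mul_rnDeriv hPμ (κ := ν),
    Measure.rnDeriv_mul_rnDeriv hQμ (κ := ν)] with x hPx hQx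
  rw [← hPx, ← hQx]
  simp only [Pi.mul_apply, ENNReal.toReal_mul, smul_eq_mul]
  rw [mul_mul_mul_comm, Real.sqrt_mul (by positivity), Real.sqrt_mul_self (by positivity),
    mul_comm]

end Bhattacharyya

section Pi

open ProbabilityTheory

variable {ι : Type*} [Fintype ι] {X : ι → Type*} [∀ i, MeasurableSpace (X i)]

lemma MeasureTheory.Measure.pi_eq_withDensity_prod_rnDeriv (μ P : ∀ i, Measure (X i))
    [∀ i, IsProbabilityMeasure (μ i)] [∀ i, IsFiniteMeasure (P i)] (hP : ∀ i, P i ≪ μ i) :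
    Measure.pi P = (Measure.pi μ).withDensity fun x => ∏ i, (P i).rnDeriv (μ i) (x i) := by
  refine Measure.pi_eq fun s hs => ?_
  have hind : (Set.univ.pi s).indicator (fun x => ∏ i, (P i).rnDeriv (μ i) (x i)) =
      fun x => ∏ i, (s i).indicator ((P i).rnDeriv (μ i)) (x i) := by
    ext x
    by_cases hx : x ∈ Set.univ.pi s
    · rw [Set.indicator_of_mem hx]
      exact Finset.prod_congr rfl fun i _ => (Set.indicator_of_mem (hx i trivial) _).symm
    · obtain ⟨i, hi⟩ : ∃ i, x i ∉ s i := by simpa [Set.mem_univ_pi] using hx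
      rw [Set.indicator_of_notMem hx]
      exact (Finset.prod_eq_zero (Finset.mem_univ i) (Set.indicator_of_notMem hi _)).symm
  rw [withDensity_apply _ (MeasurableSet.univ_pi hs), ← lintegral_indicator
    (MeasurableSet.univ_pi hs), hind, lintegral_prod_eq_prod_lintegral_of_indepFun _ _
    (iIndepFun_pi fun i => ((Measure.measurable_rnDeriv _ _).indicator (hs i)).aemeasurable)
    fun i => ((Measure.measurable_rnDeriv _ _).indicator (hs i)).comp (measurable_pi_apply i)]
  refine Finset.prod_congr rfl fun i _ => ?_
  rw [(measurePreserving_eval μ i).lintegral_comp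
    ((Measure.measurable_rnDeriv _ _).indicator (hs i)), lintegral_indicator (hs i),
    Measure.setLIntegral_rnDeriv (hP i)]

lemma MeasureTheory.Measure.pi_absolutelyContinuous_pi {μ P : ∀ i, Measure (X i)}
    [∀ i, IsProbabilityMeasure (μ i)] [∀ i, IsFiniteMeasure (P i)] (hP : ∀ i, P i ≪ μ i) :
    Measure.pi P ≪ Measure.pi μ := by
  rw [Measure.pi_eq_withDensity_prod_rnDeriv μ P hP]
  exact withDensity_absolutelyContinuous _ _

lemma MeasureTheory.Measure.rnDeriv_pi_ae (μ P : ∀ i, Measure (X i))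
    [∀ i, IsProbabilityMeasure (μ i)] [∀ i, IsFiniteMeasure (P i)] (hP : ∀ i, P i ≪ μ i) :
    (Measure.pi P).rnDeriv (Measure.pi μ) =ᵐ[Measure.pi μ]
      fun x => ∏ i, (P i).rnDeriv (μ i) (x i) := by
  rw [Measure.pi_eq_withDensity_prod_rnDeriv μ P hP]
  exact Measure.rnDeriv_withDensity _ <| Finset.measurable_prod _ fun i _ =>
    (Measure.measurable_rnDeriv _ _).comp (measurable_pi_apply i)

theorem bhattacharyya_pi (P Q ν : ∀ i, Measure (X i)) [∀ i, IsProbabilityMeasure (ν i)]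
    [∀ i, IsFiniteMeasure (P i)] [∀ i, IsFiniteMeasure (Q i)]
    (hP : ∀ i, P i ≪ ν i) (hQ : ∀ i, Q i ≪ ν i) :
    bhattacharyya (Measure.pi P) (Measure.pi Q) (Measure.pi ν) =
      ∏ i, bhattacharyya (P i) (Q i) (ν i) := by
  simp only [bhattacharyya]
  rw [← integral_fintype_prod_eq_prod]
  refine integral_congr_ae ?_
  filter_upwards [Measure.rnDeriv_pi_ae ν P hP, Measure.rnDeriv_pi_ae ν Q hQ] with x hPx hQx
  rw [hPx, hQx, ENNReal.toReal_prod, ENNReal.toReal_prod, ← Finset.prod_mul_distrib,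
    Real.sqrt_prod _ fun i _ => by positivity]

end Pi

section Tensorization

variable {Ω : Type*} [MeasurableSpace Ω]

instance isProbabilityMeasure_inv_two_smul_add (P Q : Measure Ω) [IsProbabilityMeasure P]
    [IsProbabilityMeasure Q] :
    IsProbabilityMeasure ((2 : ℝ≥0∞)⁻¹ • (P + Q)) := by
  constructor
  simp [ENNReal.inv_two_add_inv_two]

theorem hellingerSqM_pi (ι : Type*) [Fintype ι] (P Q : Measure Ω) [IsProbabilityMeasure P]
    [IsProbabilityMeasure Q] :
    hellingerSqM (Measure.pi fun _ : ι => P) (Measure.pi fun _ : ι => Q) =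
      1 - (1 - hellingerSqM P Q) ^ Fintype.card ι := by
  -- the product lemmas need a probability measure as reference
  set ν := (2 : ℝ≥0∞)⁻¹ • (P + Q)
  have hPν : P ≪ ν := (Measure.AbsolutelyContinuous.rfl.add_right Q).trans
    (Measure.absolutelyContinuous_smul (by simp))
  have hQν : Q ≪ ν := (Measure.AbsolutelyContinuous.rfl.add_right' P).trans
    (Measure.absolutelyContinuous_smul (by simp))
  have hPν_pi := Measure.pi_absolutelyContinuous_pi (μ := fun _ : ι => ν) fun _ => hPν
  have hQν_pi := Measure.pi_absolutelyContinuous_pi (μ := fun _ : ι => ν) fun _ => hQν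
  rw [hellingerSqM_eq_one_sub_bhattacharyya, hellingerSqM_eq_one_sub_bhattacharyya,
    ← bhattacharyya_eq_bhattacharyya_add hPν_pi hQν_pi,
    bhattacharyya_pi _ _ _ (fun _ => hPν) (fun _ => hQν),
    ← bhattacharyya_eq_bhattacharyya_add hPν hQν, Finset.prod_const, Finset.card_univ,
    sub_sub_cancel]

end Tensorization

section Densities

variable {α : Type*} [MeasurableSpace α] {μ : Measure α}

lemma integral_mul_le_sqrt_integral_sq_mul_sqrt_integral_sq {f g : α → ℝ} (hf : 0 ≤ᵐ[μ] f)
    (hg : 0 ≤ᵐ[μ] g) (hf₂ : MemLp f 2 μ) (hg₂ : MemLp g 2 μ) :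
    ∫ x, f x * g x ∂μ ≤ √(∫ x, f x ^ 2 ∂μ) * √(∫ x, g x ^ 2 ∂μ) := by
  have := integral_mul_le_Lp_mul_Lq_of_nonneg Real.HolderConjugate.two_two hf hg
    (by simpa using hf₂) (by simpa using hg₂)
  simpa only [Real.sqrt_eq_rpow, Real.rpow_two] using this

lemma MeasureTheory.Integrable.memLp_two_sqrt {f : α → ℝ} (hf : 0 ≤ f)
    (hf_int : Integrable f μ) :
    MemLp (fun x => √(f x)) 2 μ :=
  (memLp_two_iff_integrable_sq (Real.continuous_sqrt.comp_aestronglyMeasurable hf_int.1)).2 <|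
    hf_int.congr (.of_forall fun x => (Real.sq_sqrt (hf x)).symm)

lemma MeasureTheory.Integrable.sqrt_mul {p q : α → ℝ} (hp : 0 ≤ p) (hq : 0 ≤ q)
    (hp_int : Integrable p μ) (hq_int : Integrable q μ) : Integrable (fun x => √(p x * q x)) μ := by
  refine ((hp_int.memLp_two_sqrt hp).integrable_mul (hq_int.memLp_two_sqrt hq)).congr
    (.of_forall fun x => ?_)
  simp [Real.sqrt_mul (hp x)]

lemma min_le_sqrt_mul {a b : ℝ} (ha : 0 ≤ a) (hb : 0 ≤ b) : min a b ≤ √(a * b) :=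
  Real.le_sqrt_of_sq_le <| sq (min a b) ▸
    mul_le_mul (min_le_left a b) (min_le_right a b) (le_min ha hb) ha

lemma integral_abs_sub_le_two_mul_sqrt {p q : α → ℝ} (hp : 0 ≤ p) (hq : 0 ≤ q)
    (hp_int : Integrable p μ) (hq_int : Integrable q μ) (hp₁ : ∫ x, p x ∂μ = 1)
    (hq₁ : ∫ x, q x ∂μ = 1) :
    ∫ x, |p x - q x| ∂μ ≤ 2 * √(1 - (∫ x, √(p x * q x) ∂μ) ^ 2) := by
  set a := ∫ x, √(p x * q x) ∂μ
  have hp₂ := hp_int.memLp_two_sqrt hp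
  have hq₂ := hq_int.memLp_two_sqrt hq
  have hsq_int (s : ℝ) : ∫ x, (p x + q x + s * √(p x * q x)) ∂μ = 2 + s * a := by
    rw [integral_add (f := fun x => p x + q x) (hp_int.add hq_int)
      ((Integrable.sqrt_mul hp hq hp_int hq_int).const_mul s), integral_add hp_int hq_int,
      integral_const_mul, hp₁, hq₁, one_add_one_eq_two]
  have hF : ∫ x, |√(p x) - √(q x)| ^ 2 ∂μ = 2 - 2 * a := by
    rw [sub_eq_add_neg 2, neg_mul_eq_neg_mul, ← hsq_int]
    refine integral_congr_ae (.of_forall fun x => ?_)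
    simp only [sq_abs, Real.sqrt_mul (hp x)]
    linear_combination Real.sq_sqrt (hp x) + Real.sq_sqrt (hq x)
  have hG : ∫ x, (√(p x) + √(q x)) ^ 2 ∂μ = 2 + 2 * a := by
    rw [← hsq_int]
    refine integral_congr_ae (.of_forall fun x => ?_)
    simp only [Real.sqrt_mul (hp x)]
    linear_combination Real.sq_sqrt (hp x) + Real.sq_sqrt (hq x)
  have ha : 0 ≤ a := integral_nonneg fun x => Real.sqrt_nonneg _
  calc ∫ x, |p x - q x| ∂μ = ∫ x, |√(p x) - √(q x)| * (√(p x) + √(q x)) ∂μ := by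
        refine integral_congr_ae (.of_forall fun x => ?_)
        change |p x - q x| = |√(p x) - √(q x)| * (√(p x) + √(q x))
        rw [← abs_of_nonneg (by positivity : 0 ≤ √(p x) + √(q x)), ← abs_mul]
        congr 1
        linear_combination Real.sq_sqrt (hq x) - Real.sq_sqrt (hp x)
    _ ≤ √(2 - 2 * a) * √(2 + 2 * a) := by
        rw [← hF, ← hG]
        exact integral_mul_le_sqrt_integral_sq_mul_sqrt_integral_sq
          (.of_forall fun x => abs_nonneg _) (.of_forall fun x => by positivity)
          (hp₂.sub hq₂).abs (hp₂.add hq₂)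
    _ = 2 * √(1 - a ^ 2) := by
        rw [← Real.sqrt_mul' _ (by linarith), show (2 - 2 * a) * (2 + 2 * a) = 2 ^ 2 * (1 - a ^ 2)
          by ring, Real.sqrt_mul (by positivity), Real.sqrt_sq zero_le_two]

end Densities

section TV

variable {Ω : Type*} [MeasurableSpace Ω] {P Q μ : Measure Ω}

lemma le_tvDist [IsFiniteMeasure P] {A : Set Ω} (hA : MeasurableSet A) :
    (P A).toReal - (Q A).toReal ≤ tvDist P Q := by
  refine le_ciSup (f := fun A : {A : Set Ω // MeasurableSet A} => (P A).toReal - (Q A).toReal)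
    ⟨(P Set.univ).toReal, ?_⟩ ⟨A, hA⟩
  rintro _ ⟨B, rfl⟩
  have := ENNReal.toReal_mono (measure_ne_top P _) (measure_mono (μ := P) (Set.subset_univ B.1))
  linarith [ENNReal.toReal_nonneg (a := Q B)]

lemma toReal_measure_sub_eq_setIntegral_rnDeriv [IsFiniteMeasure P] [IsFiniteMeasure Q]
    [SigmaFinite μ] (hP : P ≪ μ) (hQ : Q ≪ μ) (A : Set Ω) :
    (P A).toReal - (Q A).toReal =
      ∫ x in A, ((P.rnDeriv μ x).toReal - (Q.rnDeriv μ x).toReal) ∂μ := by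
  rw [integral_sub Measure.integrable_toReal_rnDeriv.integrableOn
    Measure.integrable_toReal_rnDeriv.integrableOn, Measure.setIntegral_toReal_rnDeriv hP,
    Measure.setIntegral_toReal_rnDeriv hQ, measureReal_def, measureReal_def]

lemma one_sub_integral_min_le_tvDist [IsProbabilityMeasure P] [IsFiniteMeasure Q]
    [SigmaFinite μ] (hP : P ≪ μ) (hQ : Q ≪ μ) :
    1 - ∫ x, min (P.rnDeriv μ x).toReal (Q.rnDeriv μ x).toReal ∂μ ≤ tvDist P Q := by
  have hp := (Measure.measurable_rnDeriv P μ).ennreal_toReal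
  have hq := (Measure.measurable_rnDeriv Q μ).ennreal_toReal
  have hp_int : Integrable (fun x => (P.rnDeriv μ x).toReal) μ :=
    Measure.integrable_toReal_rnDeriv
  have hmin_int : Integrable (fun x => min (P.rnDeriv μ x).toReal (Q.rnDeriv μ x).toReal) μ := by
    refine hp_int.mono' (hp.min hq).aestronglyMeasurable (.of_forall fun x => ?_)
    rw [Real.norm_eq_abs, abs_of_nonneg (le_min ENNReal.toReal_nonneg ENNReal.toReal_nonneg)]
    exact min_le_left _ _
  have hA := measurableSet_le hq hp
  calc 1 - ∫ x, min (P.rnDeriv μ x).toReal (Q.rnDeriv μ x).toReal ∂μ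
      = ∫ x, ((P.rnDeriv μ x).toReal -
          min (P.rnDeriv μ x).toReal (Q.rnDeriv μ x).toReal) ∂μ := by
        rw [integral_sub hp_int hmin_int, Measure.integral_toReal_rnDeriv hP, probReal_univ]
    _ = ∫ x in {x | (Q.rnDeriv μ x).toReal ≤ (P.rnDeriv μ x).toReal},
          ((P.rnDeriv μ x).toReal - (Q.rnDeriv μ x).toReal) ∂μ := by
        rw [← integral_indicator hA]
        refine integral_congr_ae (.of_forall fun x => ?_)
        by_cases hx : (Q.rnDeriv μ x).toReal ≤ (P.rnDeriv μ x).toReal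
        · simp [hx]
        · simp [hx, (not_le.1 hx).le]
    _ ≤ tvDist P Q := by
        rw [← toReal_measure_sub_eq_setIntegral_rnDeriv hP hQ]
        exact le_tvDist hA

lemma tvDist_le_half_integral_abs_sub [IsProbabilityMeasure P] [IsProbabilityMeasure Q]
    [SigmaFinite μ] (hP : P ≪ μ) (hQ : Q ≪ μ) :
    tvDist P Q ≤ (∫ x, |(P.rnDeriv μ x).toReal - (Q.rnDeriv μ x).toReal| ∂μ) / 2 := by
  refine ciSup_le fun ⟨A, hA⟩ => ?_
  have hAc : (P Aᶜ).toReal - (Q Aᶜ).toReal = -((P A).toReal - (Q A).toReal) := by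
    rw [prob_compl_eq_one_sub hA, prob_compl_eq_one_sub hA,
      ENNReal.toReal_sub_of_le prob_le_one ENNReal.one_ne_top,
      ENNReal.toReal_sub_of_le prob_le_one ENNReal.one_ne_top]
    ring
  have hA_le := (le_abs_self _).trans (abs_integral_le_integral_abs (μ := μ.restrict A)
    (f := fun x => (P.rnDeriv μ x).toReal - (Q.rnDeriv μ x).toReal))
  have hAc_le := (neg_le_abs _).trans (abs_integral_le_integral_abs (μ := μ.restrict Aᶜ)
    (f := fun x => (P.rnDeriv μ x).toReal - (Q.rnDeriv μ x).toReal))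
  rw [← toReal_measure_sub_eq_setIntegral_rnDeriv hP hQ] at hA_le hAc_le
  have hp_int : Integrable (fun x => (P.rnDeriv μ x).toReal) μ :=
    Measure.integrable_toReal_rnDeriv
  have hq_int : Integrable (fun x => (Q.rnDeriv μ x).toReal) μ :=
    Measure.integrable_toReal_rnDeriv
  have := integral_add_compl (f := fun x => |(P.rnDeriv μ x).toReal - (Q.rnDeriv μ x).toReal|)
    hA (hp_int.sub hq_int).abs
  linarith

theorem one_sub_tvDist_le_bhattacharyya [IsProbabilityMeasure P] [IsFiniteMeasure Q]
    [SigmaFinite μ] (hP : P ≪ μ) (hQ : Q ≪ μ) :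
    1 - tvDist P Q ≤ bhattacharyya P Q μ := by
  have hp_int : Integrable (fun x => (P.rnDeriv μ x).toReal) μ :=
    Measure.integrable_toReal_rnDeriv
  have hq_int : Integrable (fun x => (Q.rnDeriv μ x).toReal) μ :=
    Measure.integrable_toReal_rnDeriv
  have hmin_le :
      ∫ x, min (P.rnDeriv μ x).toReal (Q.rnDeriv μ x).toReal ∂μ ≤ bhattacharyya P Q μ :=
    integral_mono_of_nonneg
      (.of_forall fun x => le_min ENNReal.toReal_nonneg ENNReal.toReal_nonneg)
      (Integrable.sqrt_mul (fun x => ENNReal.toReal_nonneg) (fun x => ENNReal.toReal_nonneg)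
        hp_int hq_int)
      (.of_forall fun x => min_le_sqrt_mul ENNReal.toReal_nonneg ENNReal.toReal_nonneg)
  linarith [one_sub_integral_min_le_tvDist hP hQ]

theorem tvDist_le_sqrt_one_sub_bhattacharyya_sq [IsProbabilityMeasure P] [IsProbabilityMeasure Q]
    [SigmaFinite μ] (hP : P ≪ μ) (hQ : Q ≪ μ) :
    tvDist P Q ≤ √(1 - bhattacharyya P Q μ ^ 2) := by
  have hp₁ : ∫ x, (P.rnDeriv μ x).toReal ∂μ = 1 := by
    rw [Measure.integral_toReal_rnDeriv hP, probReal_univ]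
  have hq₁ : ∫ x, (Q.rnDeriv μ x).toReal ∂μ = 1 := by
    rw [Measure.integral_toReal_rnDeriv hQ, probReal_univ]
  have := integral_abs_sub_le_two_mul_sqrt (fun x => ENNReal.toReal_nonneg)
    (fun x => ENNReal.toReal_nonneg) Measure.integrable_toReal_rnDeriv
    Measure.integrable_toReal_rnDeriv hp₁ hq₁
  rw [bhattacharyya]
  linarith [tvDist_le_half_integral_abs_sub hP hQ]

end TV

section LeCam

variable {Ω : Type*} [MeasurableSpace Ω] (P Q : Measure Ω) [IsProbabilityMeasure P]

theorem hellingerSqM_le_tvDist [IsFiniteMeasure Q] : hellingerSqM P Q ≤ tvDist P Q := by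
  have := one_sub_tvDist_le_bhattacharyya (Measure.AbsolutelyContinuous.rfl.add_right Q)
    (Measure.AbsolutelyContinuous.rfl.add_right' P)
  rw [hellingerSqM_eq_one_sub_bhattacharyya]
  linarith

theorem tvDist_le_sqrt_hellingerSqM_mul_two_sub [IsProbabilityMeasure Q] :
    tvDist P Q ≤ √(hellingerSqM P Q * (2 - hellingerSqM P Q)) := by
  convert tvDist_le_sqrt_one_sub_bhattacharyya_sq (Measure.AbsolutelyContinuous.rfl.add_right Q)
    (Measure.AbsolutelyContinuous.rfl.add_right' P) using 2
  rw [hellingerSqM_eq_one_sub_bhattacharyya]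
  ring

end LeCam

lemma le_liminf_and_limsup_le_of_le_of_le {α : Type*} {l : Filter α} [l.NeBot]
    {u v w : α → ℝ} {a b : ℝ} (hv : Tendsto v l (𝓝 a)) (hw : Tendsto w l (𝓝 b))
    (hvu : ∀ n, v n ≤ u n) (huw : ∀ n, u n ≤ w n) : a ≤ liminf u l ∧ limsup u l ≤ b := by
  have hu_ge : IsBoundedUnder (· ≥ ·) l u := hv.isBoundedUnder_ge.mono_ge (.of_forall hvu)
  have hu_le : IsBoundedUnder (· ≤ ·) l u := hw.isBoundedUnder_le.mono_le (.of_forall huw)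
  constructor
  · rw [← hv.liminf_eq]
    exact liminf_le_liminf (.of_forall hvu) hv.isBoundedUnder_ge hu_le.isCoboundedUnder_ge
  · rw [← hw.limsup_eq]
    exact limsup_le_limsup (.of_forall huw) hu_ge.isCoboundedUnder_le hw.isBoundedUnder_le

/-- If `n · H²(P_n, Q_n) → h > 0`, then
`liminf (1 - TV(P_nⁿ, Q_nⁿ)) ≥ 1 - √(1 - e^{-2h}) > 0` and
`limsup (1 - TV(P_nⁿ, Q_nⁿ)) ≤ e^{-h} < 1`. -/
theorem tv_bounds_of_hellinger_rate {Ω : Type*} [MeasurableSpace Ω]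
    (P Q : ℕ → Measure Ω)
    (hP : ∀ n, IsProbabilityMeasure (P n)) (hQ : ∀ n, IsProbabilityMeasure (Q n))
    (h : ℝ) (hpos : 0 < h)
    (hconv : Tendsto (fun n : ℕ => (n : ℝ) * hellingerSqM (P n) (Q n)) atTop (nhds h)) :
    (1 - Real.sqrt (1 - Real.exp (-2 * h)) ≤
        liminf (fun n : ℕ =>
          1 - tvDist (Measure.pi fun _ : Fin n => P n) (Measure.pi fun _ : Fin n => Q n)) atTop)
    ∧ 0 < 1 - Real.sqrt (1 - Real.exp (-2 * h))
    ∧ (limsup (fun n : ℕ =>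
          1 - tvDist (Measure.pi fun _ : Fin n => P n) (Measure.pi fun _ : Fin n => Q n)) atTop
        ≤ Real.exp (-h))
    ∧ Real.exp (-h) < 1 := by
  set u := fun n : ℕ =>
    1 - tvDist (Measure.pi fun _ : Fin n => P n) (Measure.pi fun _ : Fin n => Q n)
  set H := fun n : ℕ => hellingerSqM (Measure.pi fun _ : Fin n => P n) (Measure.pi fun _ => Q n)
  have hH : Tendsto H atTop (𝓝 (1 - Real.exp (-h))) := by
    have := Real.tendsto_one_add_pow_exp_of_tendsto (g := fun n => -hellingerSqM (P n) (Q n))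
      (by simpa only [mul_neg] using hconv.neg)
    simp only [← sub_eq_add_neg] at this
    simpa [H, hellingerSqM_pi] using this.const_sub 1
  have hlower : Tendsto (fun n => 1 - √(H n * (2 - H n))) atTop
      (𝓝 (1 - √(1 - Real.exp (-2 * h)))) := by
    convert ((hH.mul (hH.const_sub 2)).sqrt).const_sub 1 using 4
    rw [show -2 * h = -h + -h by ring, Real.exp_add]
    ring
  have hu_ge : ∀ n, 1 - √(H n * (2 - H n)) ≤ u n := fun n => by
    linarith [tvDist_le_sqrt_hellingerSqM_mul_two_sub (Measure.pi fun _ : Fin n => P n)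
      (Measure.pi fun _ => Q n)]
  have hu_le : ∀ n, u n ≤ 1 - H n := fun n => by
    linarith [hellingerSqM_le_tvDist (Measure.pi fun _ : Fin n => P n) (Measure.pi fun _ => Q n)]
  obtain ⟨hliminf, hlimsup⟩ :=
    le_liminf_and_limsup_le_of_le_of_le hlower (hH.const_sub 1) hu_ge hu_le
  refine ⟨hliminf, ?_, by simpa using hlimsup, Real.exp_lt_one_iff.2 (by linarith)⟩
  rw [sub_pos, Real.sqrt_lt' one_pos]
  linarith [Real.exp_pos (-2 * h)]
end

section
/- The envelope distribution of the family {N(δ², (2δ)²) : δ ∈ ℝ} is the equal-probability mixture of the distribution of -χ²₁ (negative of a chi-squared with one degree of freedom) and a point mass at zero; that is, its CDF is Ḡ(x) = (1/2)(1 - F_{χ²₁}(-x)) for x < 0 and Ḡ(x) = 1 for x ≥ 0, where after redefining at the discontinuity x = 0 via right limits one has Ḡ(0⁻) = 1/2. -/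
/-! Write `x = -s²` with `s > 0`. Since `δ² + 2δz + s² = (δ - s)² + 2δ(z + s)`, for `δ ≥ 0`
the event `{δ² + 2δZ ≤ x}` is contained in `{Z ≤ -s}`, with equality at `δ = s`; the symmetry
`Z ↦ -Z` of the standard normal reduces `δ < 0` to `-δ`. So the envelope at `x` is
`Φ(-s) = P(Z² > s²) / 2`. For `x ≥ 0`, `δ = 0` gives the sure event, and the left limit at `0`
is `Φ(0) = 1/2` because `Φ` is continuous. -/

open MeasureTheory ProbabilityTheory

/-- CDF of `δ² + 2δZ` for `Z ∼ N(0,1)`. -/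
noncomputable def shiftedCDF (δ x : ℝ) : ℝ :=
  (gaussianReal 0 1 {z : ℝ | δ ^ 2 + 2 * δ * z ≤ x}).toReal

/-- CDF of `χ²₁`, the square of a standard normal. -/
noncomputable def chiSq1CDF (t : ℝ) : ℝ := (gaussianReal 0 1 {z : ℝ | z ^ 2 ≤ t}).toReal

open Set Filter Topology

section SymmetricMeasure

variable {μ : Measure ℝ} [IsProbabilityMeasure μ] [NullSingletonClass μ]

theorem continuous_cdf_of_nullSingletonClass : Continuous (cdf μ) := by
  refine continuous_iff_continuousAt.2 fun a => continuousAt_iff_continuous_left_right.2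
    ⟨?_, (cdf μ).right_continuous a⟩
  rw [← continuousWithinAt_Iio_iff_Iic, (monotone_cdf μ).continuousWithinAt_Iio_iff_leftLim_eq]
  have h := (cdf μ).measure_singleton a
  rw [measure_cdf, measure_singleton, eq_comm, ENNReal.ofReal_eq_zero, sub_nonpos] at h
  exact le_antisymm ((monotone_cdf μ).leftLim_le le_rfl) h

theorem measureReal_Iic_neg_sqrt [μ.IsNegInvariant] {t : ℝ} (ht : 0 ≤ t) :
    μ.real (Iic (-√t)) = 1 / 2 * (1 - μ.real {z | z ^ 2 ≤ t}) := by
  have hcompl : {z : ℝ | z ^ 2 ≤ t}ᶜ = Iio (-√t) ∪ Ioi √t := by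
    ext z
    simp only [mem_compl_iff, mem_ofPred_eq, not_le, mem_union, mem_Iio, mem_Ioi,
      ← Real.sqrt_lt_sqrt_iff ht, Real.sqrt_sq_eq_abs, lt_abs]
    constructor <;> rintro (h | h) <;> [right; left; right; left] <;> linarith
  have hneg : μ.real (Ioi √t) = μ.real (Iio (-√t)) := by
    have h := Measure.measure_neg μ (Iio (-√t))
    rw [neg_Iio, neg_neg] at h
    rw [measureReal_def, measureReal_def, h]
  have hsplit := measureReal_compl (μ := μ) (s := {z : ℝ | z ^ 2 ≤ t})
    (isClosed_le (continuous_pow 2) continuous_const).measurableSet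
  have hdisj : Disjoint (Iio (-√t)) (Ioi √t) :=
    (Iio_disjoint_Ici (by simp [Real.sqrt_nonneg])).mono_right Ioi_subset_Ici_self
  rw [hcompl, measureReal_union hdisj measurableSet_Ioi, hneg, probReal_univ,
    measureReal_congr Iio_ae_eq_Iic] at hsplit
  linarith

theorem cdf_zero_eq_half [μ.IsNegInvariant] : cdf μ 0 = 1 / 2 := by
  have h := measureReal_Iic_neg_sqrt (μ := μ) le_rfl
  simp only [Real.sqrt_zero, neg_zero, sq_nonpos_iff, ofPred_eq_eq_singleton] at h
  rw [cdf_eq_real, h, measureReal_def, measure_singleton]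
  norm_num

end SymmetricMeasure

instance {m : ℝ} {v : NNReal} [NeZero v] : NullSingletonClass (gaussianReal m v) :=
  ⟨fun _ => gaussianReal_absolutelyContinuous m (NeZero.ne v) Real.volume_singleton⟩

instance {v : NNReal} : (gaussianReal 0 v).IsNegInvariant :=
  ⟨by simpa [Measure.neg_def] using gaussianReal_map_neg (μ := 0) (v := v)⟩

theorem shiftedCDF_neg (δ x : ℝ) : shiftedCDF (-δ) x = shiftedCDF δ x := by
  rw [shiftedCDF, ← Measure.measure_neg (gaussianReal 0 1)]
  congr 2
  ext z
  simp only [Set.mem_neg, mem_ofPred_eq]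
  ring_nf

theorem shiftedCDF_abs (δ x : ℝ) : shiftedCDF |δ| x = shiftedCDF δ x := by
  rcases abs_choice δ with h | h <;> rw [h]
  exact shiftedCDF_neg δ x

theorem shiftedCDF_le_one (δ x : ℝ) : shiftedCDF δ x ≤ 1 := measureReal_le_one

theorem shiftedCDF_le_cdf {x : ℝ} (hx : x < 0) (δ : ℝ) :
    shiftedCDF δ x ≤ cdf (gaussianReal 0 1) (-√(-x)) := by
  rw [← shiftedCDF_abs, cdf_eq_real]
  refine measureReal_mono fun z (hz : |δ| ^ 2 + 2 * |δ| * z ≤ x) => ?_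
  have hs2 := Real.sq_sqrt (neg_nonneg.2 hx.le)
  rcases (abs_nonneg δ).eq_or_lt with hδ | hδ
  · rw [← hδ] at hz
    linarith
  · -- `|δ|² + 2|δ|z + s² = (|δ| - s)² + 2|δ|(z + s)` with `s = √(-x)`
    rw [mem_Iic]
    nlinarith [sq_nonneg (|δ| - √(-x))]

theorem shiftedCDF_sqrt_neg {x : ℝ} (hx : x < 0) :
    shiftedCDF √(-x) x = cdf (gaussianReal 0 1) (-√(-x)) := by
  rw [cdf_eq_real, shiftedCDF, measureReal_def]
  have hs := Real.sqrt_pos.2 (neg_pos.2 hx)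
  have hs2 := Real.sq_sqrt (neg_nonneg.2 hx.le)
  congr 2
  ext z
  simp only [mem_ofPred_eq, mem_Iic]
  constructor <;> intro h <;> nlinarith

theorem bddAbove_range_shiftedCDF (x : ℝ) : BddAbove (range fun δ => shiftedCDF δ x) :=
  ⟨1, forall_mem_range.2 fun δ => shiftedCDF_le_one δ x⟩

theorem iSup_shiftedCDF_of_neg {x : ℝ} (hx : x < 0) :
    ⨆ δ, shiftedCDF δ x = cdf (gaussianReal 0 1) (-√(-x)) :=
  le_antisymm (ciSup_le (shiftedCDF_le_cdf hx))
    ((shiftedCDF_sqrt_neg hx).symm.le.trans (le_ciSup (bddAbove_range_shiftedCDF x) _))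

theorem iSup_shiftedCDF_of_nonneg {x : ℝ} (hx : 0 ≤ x) : ⨆ δ, shiftedCDF δ x = 1 := by
  have h0 : shiftedCDF 0 x = 1 := by simp [shiftedCDF, hx]
  exact le_antisymm (ciSup_le fun δ => shiftedCDF_le_one δ x)
    (h0.symm.le.trans (le_ciSup (bddAbove_range_shiftedCDF x) 0))

/-- The envelope of `{N(δ², (2δ)²) : δ ∈ ℝ}` is the equal-probability mixture of
`-χ²₁` and a point mass at `0`: its CDF is `Ḡ(x) = (1/2)(1 - F_{χ²₁}(-x))` for
`x < 0`, `Ḡ(x) = 1` for `x ≥ 0`, and the left limit at `0` is `1/2`. -/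
theorem envelope_weak_weak_mixture :
    (∀ x : ℝ, x < 0 →
      (⨆ δ : ℝ, shiftedCDF δ x) = (1 / 2) * (1 - chiSq1CDF (-x)))
    ∧ (∀ x : ℝ, 0 ≤ x → (⨆ δ : ℝ, shiftedCDF δ x) = 1)
    ∧ Filter.Tendsto (fun x : ℝ => ⨆ δ : ℝ, shiftedCDF δ x)
        (nhdsWithin 0 (Set.Iio 0)) (nhds (1 / 2)) := by
  refine ⟨fun x hx => ?_, fun x hx => iSup_shiftedCDF_of_nonneg hx, ?_⟩
  · rw [iSup_shiftedCDF_of_neg hx, cdf_eq_real, measureReal_Iic_neg_sqrt (neg_nonneg.2 hx.le)]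
    rfl
  · have hcont : Continuous fun x : ℝ => cdf (gaussianReal 0 1) (-√(-x)) :=
      continuous_cdf_of_nullSingletonClass.comp (by fun_prop)
    have hcdf : Tendsto (fun x => cdf (gaussianReal 0 1) (-√(-x))) (𝓝 0) (𝓝 (1 / 2)) := by
      simpa [cdf_zero_eq_half] using hcont.tendsto 0
    refine (hcdf.mono_left nhdsWithin_le_nhds).congr' ?_
    filter_upwards [self_mem_nhdsWithin] with x hx using (iSup_shiftedCDF_of_neg hx).symm
end

section
/- Let Z₁, Z₂ be independent standard normal random variables and for γ ∈ ℝ let F_γ(x) = P((Z₁ + γ)² - Z₂² ≤ x). Then for every x ∈ ℝ, γ = 0 is the unique maximizer of γ ↦ F_γ(x); hence the envelope distribution of the family {F_γ : γ ∈ ℝ} is the distribution of Z₁² - Z₂². -/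
open MeasureTheory ProbabilityTheory

/-- CDF of `(Z₁ + γ)² - Z₂²` for independent standard normals `Z₁, Z₂`. -/
noncomputable def besselFamilyCDF (γ x : ℝ) : ℝ :=
  (((gaussianReal 0 1).prod (gaussianReal 0 1))
    {p : ℝ × ℝ | (p.1 + γ) ^ 2 - p.2 ^ 2 ≤ x}).toReal

/-!
Conditioning on `Z₂ = z`, the event `(Z₁ + γ)² - Z₂² ≤ x` becomes `(Z₁ + γ)² ≤ x + z²`, i.e. `Z₁`
lies in an interval of half-width `√(x + z²)` centred at `-γ`. For a continuous even density `f`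
that is strictly decreasing on `[0, ∞)`, the mass `∫_{c-L}^{c+L} f` of an interval of fixed length
has derivative `f (c + L) - f (c - L) < 0` in `c > 0`, so it is uniquely maximal at `c = 0`.
The conditional inequality is strict whenever `x + z² > 0`, which holds on a half-line of positive
Gaussian measure, so it survives integration over `z`.
-/

open Set intervalIntegral
open scoped ENNReal NNReal

section SymmetricUnimodal

variable {f : ℝ → ℝ}

lemma apply_lt_apply_of_abs_lt (heven : ∀ x, f (-x) = f x) (hf : StrictAntiOn f (Ici 0))
    {a b : ℝ} (h : |a| < |b|) : f b < f a := by
  have habs : ∀ x, f |x| = f x := fun x => by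
    rcases abs_choice x with hx | hx <;> rw [hx]
    exact heven x
  rw [← habs a, ← habs b]
  exact hf (abs_nonneg a) (abs_nonneg b) h

lemma integral_shift_neg_of_even (heven : ∀ x, f (-x) = f x) (L c : ℝ) :
    ∫ t in (-c - L)..(-c + L), f t = ∫ t in (c - L)..(c + L), f t := by
  conv_rhs => rw [← integral_congr (fun t _ => heven t), integral_comp_neg]
  ring_nf

lemma hasDerivAt_integral_shift (hcont : Continuous f) (L c : ℝ) :
    HasDerivAt (fun c => ∫ t in (c - L)..(c + L), f t) (f (c + L) - f (c - L)) c := by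
  have hprim : ∀ y, HasDerivAt (fun u => ∫ t in (0 : ℝ)..u, f t) (f y) y :=
    fun y => (hcont.integral_hasStrictDerivAt 0 y).hasDerivAt
  have hsplit : (fun c => ∫ t in (c - L)..(c + L), f t)
      = fun c => (∫ t in (0 : ℝ)..(c + L), f t) - ∫ t in (0 : ℝ)..(c - L), f t := by
    funext c
    exact (integral_interval_sub_left (hcont.intervalIntegrable _ _)
      (hcont.intervalIntegrable _ _)).symm
  rw [hsplit]
  exact ((hprim (c + L)).comp_add_const c L).sub ((hprim (c - L)).comp_sub_const c L)

lemma integral_shift_strictAntiOn (hcont : Continuous f) (heven : ∀ x, f (-x) = f x)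
    (hf : StrictAntiOn f (Ici 0)) {L : ℝ} (hL : 0 < L) :
    StrictAntiOn (fun c => ∫ t in (c - L)..(c + L), f t) (Ici 0) := by
  refine strictAntiOn_of_deriv_neg (convex_Ici 0)
    (fun c _ => (hasDerivAt_integral_shift hcont L c).continuousAt.continuousWithinAt) ?_
  intro c hc
  rw [interior_Ici, mem_Ioi] at hc
  rw [(hasDerivAt_integral_shift hcont L c).deriv, sub_neg]
  refine apply_lt_apply_of_abs_lt heven hf ?_
  rw [abs_of_pos (by linarith : 0 < c + L), abs_lt]
  constructor <;> linarith

theorem integral_shift_lt_of_even_of_strictAntiOn (hcont : Continuous f)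
    (heven : ∀ x, f (-x) = f x) (hf : StrictAntiOn f (Ici 0)) {L c : ℝ} (hL : 0 < L) (hc : c ≠ 0) :
    ∫ t in (c - L)..(c + L), f t < ∫ t in (-L)..L, f t := by
  have hanti := integral_shift_strictAntiOn hcont heven hf hL
  have hzero : ∫ t in (-L)..L, f t = ∫ t in (0 - L)..(0 + L), f t := by simp
  rw [hzero]
  rcases hc.lt_or_gt with hneg | hpos
  · rw [← integral_shift_neg_of_even heven]
    exact hanti self_mem_Ici (mem_Ici.2 (by linarith)) (by linarith)
  · exact hanti self_mem_Ici (mem_Ici.2 hpos.le) hpos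

theorem integral_shift_le_of_even_of_strictAntiOn (hcont : Continuous f)
    (heven : ∀ x, f (-x) = f x) (hf : StrictAntiOn f (Ici 0)) {L : ℝ} (hL : 0 ≤ L) (c : ℝ) :
    ∫ t in (c - L)..(c + L), f t ≤ ∫ t in (-L)..L, f t := by
  rcases hL.eq_or_lt with rfl | hL
  · simp
  rcases eq_or_ne c 0 with rfl | hc
  · simp
  exact (integral_shift_lt_of_even_of_strictAntiOn hcont heven hf hL hc).le

end SymmetricUnimodal

lemma setOf_add_sq_le_eq_Icc (γ : ℝ) {t : ℝ} (ht : 0 ≤ t) :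
    {z : ℝ | (z + γ) ^ 2 ≤ t} = Icc (-γ - √t) (-γ + √t) := by
  ext z
  simp only [mem_ofPred_eq, mem_Icc, Real.sq_le ht]
  constructor <;> rintro ⟨h₁, h₂⟩ <;> constructor <;> linarith

lemma setOf_add_sq_le_eq_empty (γ : ℝ) {t : ℝ} (ht : t < 0) : {z : ℝ | (z + γ) ^ 2 ≤ t} = ∅ :=
  eq_empty_of_forall_notMem fun z hz => (ht.trans_le (sq_nonneg (z + γ))).not_ge hz

lemma setOf_sq_le_eq_Icc {t : ℝ} (ht : 0 ≤ t) : {z : ℝ | z ^ 2 ≤ t} = Icc (-√t) √t := by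
  simpa using setOf_add_sq_le_eq_Icc 0 ht

lemma prod_setOf_add_sq_sub_sq_le (μ ν : Measure ℝ) [SFinite μ] [SFinite ν] (γ x : ℝ) :
    μ.prod ν {p : ℝ × ℝ | (p.1 + γ) ^ 2 - p.2 ^ 2 ≤ x}
      = ∫⁻ z, μ {y | (y + γ) ^ 2 ≤ x + z ^ 2} ∂ν := by
  rw [Measure.prod_apply_symm (measurableSet_le (by fun_prop) measurable_const)]
  simp only [preimage_ofPred_eq, sub_le_iff_le_add]

lemma measurable_measure_setOf_sq_le (μ : Measure ℝ) (x : ℝ) :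
    Measurable fun z : ℝ => μ {y | y ^ 2 ≤ x + z ^ 2} := by
  have hmono : Monotone fun t : ℝ => μ {y | y ^ 2 ≤ t} :=
    fun _ _ hst => measure_mono fun _ hy => le_trans hy hst
  exact hmono.measurable.comp (by fun_prop)

section Gaussian

lemma gaussianPDFReal_zero_neg (v : ℝ≥0) (x : ℝ) :
    gaussianPDFReal 0 v (-x) = gaussianPDFReal 0 v x := by
  simp [gaussianPDFReal]

lemma continuous_gaussianPDFReal (μ : ℝ) (v : ℝ≥0) : Continuous (gaussianPDFReal μ v) := by
  unfold gaussianPDFReal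
  fun_prop

variable {v : ℝ≥0}

lemma strictAntiOn_gaussianPDFReal_zero (hv : v ≠ 0) :
    StrictAntiOn (gaussianPDFReal 0 v) (Ici 0) := by
  intro a ha b hb hab
  simp only [gaussianPDFReal, sub_zero]
  gcongr

lemma gaussianReal_Icc_eq_ofReal_integral (μ : ℝ) (hv : v ≠ 0) {a b : ℝ} (hab : a ≤ b) :
    gaussianReal μ v (Icc a b) = ENNReal.ofReal (∫ t in a..b, gaussianPDFReal μ v t) := by
  rw [gaussianReal_apply_eq_integral μ hv, integral_Icc_eq_integral_Ioc, integral_of_le hab]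

theorem gaussianReal_Icc_shift_lt (hv : v ≠ 0) {L c : ℝ} (hL : 0 < L) (hc : c ≠ 0) :
    gaussianReal 0 v (Icc (c - L) (c + L)) < gaussianReal 0 v (Icc (-L) L) := by
  rw [gaussianReal_Icc_eq_ofReal_integral 0 hv (by linarith),
    gaussianReal_Icc_eq_ofReal_integral 0 hv (by linarith), ENNReal.ofReal_lt_ofReal_iff_of_nonneg
      (integral_nonneg (by linarith) fun t _ => gaussianPDFReal_nonneg 0 v t)]
  exact integral_shift_lt_of_even_of_strictAntiOn (continuous_gaussianPDFReal 0 v)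
    (gaussianPDFReal_zero_neg v) (strictAntiOn_gaussianPDFReal_zero hv) hL hc

theorem gaussianReal_Icc_shift_le (hv : v ≠ 0) {L : ℝ} (hL : 0 ≤ L) (c : ℝ) :
    gaussianReal 0 v (Icc (c - L) (c + L)) ≤ gaussianReal 0 v (Icc (-L) L) := by
  rw [gaussianReal_Icc_eq_ofReal_integral 0 hv (by linarith),
    gaussianReal_Icc_eq_ofReal_integral 0 hv (by linarith)]
  exact ENNReal.ofReal_le_ofReal <| integral_shift_le_of_even_of_strictAntiOn
    (continuous_gaussianPDFReal 0 v) (gaussianPDFReal_zero_neg v)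
    (strictAntiOn_gaussianPDFReal_zero hv) hL c

theorem gaussianReal_add_sq_le_lt (hv : v ≠ 0) {γ t : ℝ} (hγ : γ ≠ 0) (ht : 0 < t) :
    gaussianReal 0 v {z | (z + γ) ^ 2 ≤ t} < gaussianReal 0 v {z | z ^ 2 ≤ t} := by
  rw [setOf_add_sq_le_eq_Icc γ ht.le, setOf_sq_le_eq_Icc ht.le]
  exact gaussianReal_Icc_shift_lt hv (Real.sqrt_pos.2 ht) (neg_ne_zero.2 hγ)

theorem gaussianReal_add_sq_le_le (hv : v ≠ 0) (γ t : ℝ) :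
    gaussianReal 0 v {z | (z + γ) ^ 2 ≤ t} ≤ gaussianReal 0 v {z | z ^ 2 ≤ t} := by
  rcases lt_or_ge t 0 with ht | ht
  · simp [setOf_add_sq_le_eq_empty γ ht]
  rw [setOf_add_sq_le_eq_Icc γ ht, setOf_sq_le_eq_Icc ht]
  exact gaussianReal_Icc_shift_le hv (Real.sqrt_nonneg t) (-γ)

lemma gaussianReal_Ioi_ne_zero (μ : ℝ) (hv : v ≠ 0) (a : ℝ) : gaussianReal μ v (Ioi a) ≠ 0 :=
  fun h => by simpa using gaussianReal_absolutelyContinuous' μ hv h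

theorem gaussianReal_prod_add_sq_sub_sq_le_lt (hv : v ≠ 0) {γ : ℝ} (hγ : γ ≠ 0) (x : ℝ) :
    (gaussianReal 0 v).prod (gaussianReal 0 v) {p : ℝ × ℝ | (p.1 + γ) ^ 2 - p.2 ^ 2 ≤ x}
      < (gaussianReal 0 v).prod (gaussianReal 0 v) {p : ℝ × ℝ | p.1 ^ 2 - p.2 ^ 2 ≤ x} := by
  have hcentred := prod_setOf_add_sq_sub_sq_le (gaussianReal 0 v) (gaussianReal 0 v) 0 x
  simp only [add_zero] at hcentred
  have hfin := measure_ne_top ((gaussianReal 0 v).prod (gaussianReal 0 v))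
    {p : ℝ × ℝ | (p.1 + γ) ^ 2 - p.2 ^ 2 ≤ x}
  rw [prod_setOf_add_sq_sub_sq_le] at hfin ⊢
  rw [hcentred]
  refine lintegral_strict_mono_of_ae_le_of_ae_lt_on
    (measurable_measure_setOf_sq_le _ x).aemeasurable hfin
    (ae_of_all _ fun z => gaussianReal_add_sq_le_le hv γ _)
    (gaussianReal_Ioi_ne_zero 0 hv √|x|) (ae_of_all _ fun z hz => ?_)
  refine gaussianReal_add_sq_le_lt hv hγ ?_
  have hz2 : |x| < z ^ 2 := (Real.sqrt_lt' ((Real.sqrt_nonneg _).trans_lt hz)).1 hz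
  linarith [neg_abs_le x]

end Gaussian

theorem besselFamilyCDF_lt (x : ℝ) {γ : ℝ} (hγ : γ ≠ 0) :
    besselFamilyCDF γ x < besselFamilyCDF 0 x := by
  simp only [besselFamilyCDF, add_zero]
  exact ENNReal.toReal_strict_mono (measure_ne_top _ _)
    (gaussianReal_prod_add_sq_sub_sq_le_lt one_ne_zero hγ x)

/-- For every `x`, `γ = 0` is the unique maximizer of `γ ↦ P((Z₁ + γ)² - Z₂² ≤ x)`;
hence the envelope of this family is the distribution of `Z₁² - Z₂²`. -/
theorem envelope_bessel :
    (∀ x γ : ℝ, γ ≠ 0 → besselFamilyCDF γ x < besselFamilyCDF 0 x)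
    ∧ (∀ x : ℝ, (⨆ γ : ℝ, besselFamilyCDF γ x) = besselFamilyCDF 0 x) := by
  have hle : ∀ x γ, besselFamilyCDF γ x ≤ besselFamilyCDF 0 x := fun x γ => by
    rcases eq_or_ne γ 0 with rfl | hγ
    · exact le_rfl
    · exact (besselFamilyCDF_lt x hγ).le
  refine ⟨fun x γ hγ => besselFamilyCDF_lt x hγ, fun x => ?_⟩
  exact le_antisymm (ciSup_le (hle x)) (le_ciSup ⟨_, forall_mem_range.2 (hle x)⟩ 0)
end

section
/- Consider the trivariate Gaussian model with mean zero and positive definite covariance Σ, parametrized under the constraint σ₁₂σ₃₃ = σ₁₃σ₂₃ (conditional independence X₁ ⊥ X₂ | X₃). Given a sample covariance matrix S (positive definite), the maximum likelihood estimate of Σ within this model sets σ̂₁₁ = s₁₁, σ̂₂₂ = s₂₂, σ̂₃₃ = s₃₃, σ̂₁₃ = s₁₃, σ̂₂₃ = s₂₃, and σ̂₁₂ = s₁₃s₂₃/s₃₃; i.e., this Σ̂ maximizes ℓ(Σ) = -log|Σ| - Tr(SΣ⁻¹) over the set {Σ positive definite : σ₁₂σ₃₃ = σ₁₃σ₂₃}.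 -/
/-!
Write `Σ̂ = mleCI S`. For symmetric `T` the model constraint says exactly that `(T⁻¹)₁₂ = 0`, and
`Σ̂` differs from `S` only in the `(1,2)`, `(2,1)` entries, so `Tr(S T⁻¹) = Tr(Σ̂ T⁻¹)` for every
`T` in the model, `Σ̂` included; in particular `Tr(S Σ̂⁻¹) = 3`. The claim then reduces to
`3 + log|Σ̂| - log|T| ≤ Tr(Σ̂ T⁻¹)`, which is `log λ ≤ λ - 1` summed over the eigenvalues of
`T^{-1/2} Σ̂ T^{-1/2}`. Positive definiteness of `Σ̂` comes from completing the square in the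
third coordinate.
-/

open Matrix

/-- The candidate MLE within the conditional-independence model `σ₁₂σ₃₃ = σ₁₃σ₂₃`:
agrees with `S` except the `(1,2)` (and `(2,1)`) entry, which is `s₁₃s₂₃/s₃₃`. -/
noncomputable def mleCI (S : Matrix (Fin 3) (Fin 3) ℝ) : Matrix (Fin 3) (Fin 3) ℝ :=
  fun i j =>
    if (i = 0 ∧ j = 1) ∨ (i = 1 ∧ j = 0) then S 0 2 * S 1 2 / S 2 2 else S i j

namespace Matrix

variable {n : Type*}

theorem PosDef.mul_sub_mul_pos {S : Matrix n n ℝ} (hS : S.PosDef) {i j : n} (hij : i ≠ j) :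
    0 < S i i * S j j - S i j * S j i := by
  have hinj : Function.Injective ![i, j] := by
    intro a b; fin_cases a <;> fin_cases b <;> simp [hij, hij.symm]
  have := (hS.submatrix hinj).det_pos
  rw [det_fin_two] at this
  simpa using this

variable [Fintype n]

theorem trace_mul_eq_of_eq_or_eq_zero {R : Type*} [NonUnitalNonAssocSemiring R]
    {A B K : Matrix n n R} (h : ∀ i j, A i j = B i j ∨ K j i = 0) :
    (A * K).trace = (B * K).trace := by
  simp only [trace, diag, mul_apply]
  refine Finset.sum_congr rfl fun i _ => Finset.sum_congr rfl fun j _ => ?_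
  rcases h i j with h | h <;> simp [h]

namespace PosDef

variable [DecidableEq n]

theorem card_add_log_det_le_trace {M : Matrix n n ℝ} (hM : M.PosDef) :
    (Fintype.card n : ℝ) + Real.log M.det ≤ M.trace := by
  have hev := hM.eigenvalues_pos
  calc (Fintype.card n : ℝ) + Real.log M.det
      = ∑ i, (1 + Real.log (hM.1.eigenvalues i)) := by
        rw [hM.1.det_eq_prod_eigenvalues, Finset.sum_add_distrib]
        simp [Real.log_prod fun i _ => (hev i).ne']
    _ ≤ ∑ i, hM.1.eigenvalues i :=
        Finset.sum_le_sum fun i _ => by linarith [Real.log_le_sub_one_of_pos (hev i)]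
    _ = M.trace := by simp [hM.1.trace_eq_sum_eigenvalues]

open scoped MatrixOrder in
theorem card_add_log_det_sub_log_det_le_trace_mul_inv {A B : Matrix n n ℝ}
    (hA : A.PosDef) (hB : B.PosDef) :
    (Fintype.card n : ℝ) + Real.log A.det - Real.log B.det ≤ (A * B⁻¹).trace := by
  set C := CFC.sqrt B⁻¹
  have hCC : C * C = B⁻¹ := CFC.sqrt_mul_sqrt_self _ hB.inv.posSemidef.nonneg
  have hCstar : star C = C := (CFC.sqrt_nonneg B⁻¹).posSemidef.1.eq
  have hdetC : C.det * C.det = B.det⁻¹ := by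
    rw [← det_mul, hCC, det_nonsing_inv, Ring.inverse_eq_inv']
  have hCunit : IsUnit C := (isUnit_iff_isUnit_det C).mpr <|
    (left_ne_zero_of_mul (hdetC ▸ inv_ne_zero hB.det_pos.ne')).isUnit
  have hM : (C * A * C).PosDef := by
    simpa only [hCstar] using hCunit.posDef_star_left_conjugate_iff.mpr hA
  have htr : (C * A * C).trace = (A * B⁻¹).trace := by
    rw [trace_mul_cycle, hCC, trace_mul_comm]
  have hdet : (C * A * C).det = A.det * B.det⁻¹ := by
    rw [det_mul, det_mul]; linear_combination A.det * hdetC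
  have := hM.card_add_log_det_le_trace
  rw [htr, hdet, Real.log_mul hA.det_pos.ne' (inv_ne_zero hB.det_pos.ne'), Real.log_inv] at this
  linarith

end PosDef

theorem inv_apply_zero_one_eq_zero_of_isSymm {T : Matrix (Fin 3) (Fin 3) ℝ} (hT : T.IsSymm)
    (hT01 : T 0 1 * T 2 2 = T 0 2 * T 1 2) : T⁻¹ 0 1 = 0 := by
  rw [inv_def, smul_apply, adjugate_fin_three]
  simp [hT.apply 1 2, hT01]

end Matrix

section mleCI

variable (S : Matrix (Fin 3) (Fin 3) ℝ)

theorem trace_mul_inv_eq_trace_mleCI_mul_inv {T : Matrix (Fin 3) (Fin 3) ℝ} (hT : T.IsSymm)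
    (hT01 : T 0 1 * T 2 2 = T 0 2 * T 1 2) :
    (S * T⁻¹).trace = (mleCI S * T⁻¹).trace := by
  have h01 := inv_apply_zero_one_eq_zero_of_isSymm hT hT01
  have h10 : T⁻¹ 1 0 = 0 := hT.inv.apply 0 1 ▸ h01
  refine trace_mul_eq_of_eq_or_eq_zero fun i j => ?_
  fin_cases i <;> fin_cases j <;> simp [mleCI, h01, h10]

variable {S}

theorem mleCI_mem_model (h22 : S 2 2 ≠ 0) :
    mleCI S 0 1 * mleCI S 2 2 = mleCI S 0 2 * mleCI S 1 2 := by
  simp [mleCI, div_mul_cancel₀ _ h22]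

theorem isSymm_mleCI (hS : S.IsSymm) : (mleCI S).IsSymm :=
  IsSymm.ext fun i j => by fin_cases i <;> fin_cases j <;> simp [mleCI, hS.apply]

theorem mul_dotProduct_mleCI_mulVec (hS : S.IsSymm) (h22 : S 2 2 ≠ 0) (x : Fin 3 → ℝ) :
    S 2 2 * (x ⬝ᵥ mleCI S *ᵥ x) =
      (S 0 0 * S 2 2 - S 0 2 * S 2 0) * x 0 ^ 2 + (S 1 1 * S 2 2 - S 1 2 * S 2 1) * x 1 ^ 2
        + (S 2 0 * x 0 + S 2 1 * x 1 + S 2 2 * x 2) ^ 2 := by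
  simp only [dotProduct, mulVec, Fin.sum_univ_three, mleCI, Fin.reduceEq, and_true, and_false,
    or_true, or_false, ↓reduceIte, hS.apply]
  field_simp
  ring

theorem posDef_mleCI (hS : S.PosDef) : (mleCI S).PosDef := by
  have hSsymm : S.IsSymm := isHermitian_iff_isSymm.mp hS.1
  have h22 : 0 < S 2 2 := hS.diag_pos
  have h02 := hS.mul_sub_mul_pos (i := 0) (j := 2) (by decide)
  have h12 := hS.mul_sub_mul_pos (i := 1) (j := 2) (by decide)
  refine .of_dotProduct_mulVec_pos (isHermitian_iff_isSymm.mpr (isSymm_mleCI hSsymm))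
    fun x hx => ?_
  rw [star_trivial, ← mul_pos_iff_of_pos_left h22, mul_dotProduct_mleCI_mulVec hSsymm h22.ne']
  by_cases h01 : x 0 = 0 ∧ x 1 = 0
  · have h2 : x 2 ≠ 0 := fun h2 => hx (funext fun i => by fin_cases i <;> simp [h01, h2])
    have hsq : 0 < (S 2 2 * x 2) ^ 2 := by positivity
    simpa [h01.1, h01.2] using hsq
  · rcases not_and_or.mp h01 with h | h
    · nlinarith [mul_pos h02 (sq_pos_of_ne_zero h), sq_nonneg (x 1)]
    · nlinarith [mul_pos h12 (sq_pos_of_ne_zero h), sq_nonneg (x 0)]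

end mleCI

theorem mle_conditional_independence_general (S : Matrix (Fin 3) (Fin 3) ℝ)
    (hS : S.PosDef) :
    (mleCI S) 0 1 * (mleCI S) 2 2 = (mleCI S) 0 2 * (mleCI S) 1 2
    ∧ (mleCI S).PosDef
    ∧ ∀ T : Matrix (Fin 3) (Fin 3) ℝ, T.PosDef → T.IsSymm →
        T 0 1 * T 2 2 = T 0 2 * T 1 2 →
        -Real.log T.det - (S * T⁻¹).trace
          ≤ -Real.log (mleCI S).det - (S * (mleCI S)⁻¹).trace := by
  have hmodel : mleCI S 0 1 * mleCI S 2 2 = mleCI S 0 2 * mleCI S 1 2 :=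
    mleCI_mem_model hS.diag_pos.ne'
  have hpd := posDef_mleCI hS
  refine ⟨hmodel, hpd, fun T hT hTsymm hTmodel => ?_⟩
  have htr_mleCI : (S * (mleCI S)⁻¹).trace = 3 := by
    rw [trace_mul_inv_eq_trace_mleCI_mul_inv S (isSymm_mleCI (isHermitian_iff_isSymm.mp hS.1))
      hmodel, mul_nonsing_inv _ hpd.det_pos.ne'.isUnit]
    simp
  have hgibbs := hpd.card_add_log_det_sub_log_det_le_trace_mul_inv hT
  rw [Fintype.card_fin, ← trace_mul_inv_eq_trace_mleCI_mul_inv S hTsymm hTmodel] at hgibbs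
  push_cast at hgibbs
  linarith

/-- Given a positive definite sample covariance `S`, the matrix `Σ̂` with
`σ̂ᵢⱼ = sᵢⱼ` except `σ̂₁₂ = s₁₃s₂₃/s₃₃` lies in the model `{Σ ≻ 0 : σ₁₂σ₃₃ = σ₁₃σ₂₃}`
and maximizes the Gaussian log-likelihood `ℓ(Σ) = -log|Σ| - Tr(SΣ⁻¹)` over it. -/
theorem mle_conditional_independence (S : Matrix (Fin 3) (Fin 3) ℝ)
    (hS : S.PosDef) (hSsymm : S.IsSymm) :
    (mleCI S) 0 1 * (mleCI S) 2 2 = (mleCI S) 0 2 * (mleCI S) 1 2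
    ∧ (mleCI S).PosDef
    ∧ ∀ T : Matrix (Fin 3) (Fin 3) ℝ, T.PosDef → T.IsSymm →
        T 0 1 * T 2 2 = T 0 2 * T 1 2 →
        -Real.log T.det - (S * T⁻¹).trace
          ≤ -Real.log (mleCI S).det - (S * (mleCI S)⁻¹).trace :=
  mle_conditional_independence_general S hS
end
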